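/- arXiv:2310.09712 — 4 statements merged into one kernel-verified Lean document; each statement's English description precedes it below -/
import Mathlib

section
/- Let k_x, k_z, k_1, k_2, k_3 > 0 and set θ* := k_3/(k_1 + k_3) and ε* := k_x·k_z/(k_1·k_3 + k_x·k_2). Then for every ε ∈ (0, ε*) there exists λ > 0 such that for all a, b ≥ 0: (1 − θ*)·(−k_x·a² + k_3·a·b) + θ*·(k_1·a·b + k_2·b² − (k_z/ε)·b²) ≤ −λ·(a² + b²). -/
/-! Multiplying the composite expression by `k₁ + k₃` turns it into `-(A a² - 2 C a b + B b²)` with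
`A = k₁kₓ`, `B = k₃(k_z/ε - k₂)`, `C = k₁k₃`: the weight `θ*` is chosen exactly so that the two
cross terms merge into one. The condition `ε < ε*` is the discriminant condition `C² < A B`, and a
positive definite binary quadratic form dominates a multiple of `a² + b²`. -/

/-- With `λ = (AB - C²)/(A + B)`, the defect `(A + B) Q(a, b) - (AB - C²)(a² + b²)` equals
`(Aa - Cb)² + (Bb - Ca)²`. -/
theorem exists_pos_mul_sq_add_sq_le_of_sq_lt_mul {A B C : ℝ} (hA : 0 < A) (hdisc : C ^ 2 < A * B) :
    ∃ lam : ℝ, 0 < lam ∧ ∀ a b : ℝ, lam * (a ^ 2 + b ^ 2) ≤ A * a ^ 2 - 2 * C * a * b + B * b ^ 2 := by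
  have hB : 0 < B := pos_of_mul_pos_right ((sq_nonneg C).trans_lt hdisc) hA.le
  have hAB : 0 < A + B := add_pos hA hB
  refine ⟨(A * B - C ^ 2) / (A + B), div_pos (sub_pos.2 hdisc) hAB, fun a b => ?_⟩
  rw [div_mul_eq_mul_div, div_le_iff₀ hAB]
  nlinarith [sq_nonneg (A * a - C * b), sq_nonneg (B * b - C * a)]

theorem convex_combination_eq_neg_quadForm_div {kx k1 k2 k3 u : ℝ} (hK : k1 + k3 ≠ 0) (a b : ℝ) :
    (1 - k3 / (k1 + k3)) * (-(kx * a ^ 2) + k3 * a * b)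
        + (k3 / (k1 + k3)) * (k1 * a * b + k2 * b ^ 2 - u * b ^ 2)
      = -(k1 * kx * a ^ 2 - 2 * (k1 * k3) * a * b + k3 * (u - k2) * b ^ 2) / (k1 + k3) := by
  field_simp
  ring

theorem sq_lt_mul_of_lt_epsStar {kx kz k1 k2 k3 ε : ℝ} (hkx : 0 < kx) (hk1 : 0 < k1)
    (hk2 : 0 < k2) (hk3 : 0 < k3) (hε : 0 < ε) (hεlt : ε < kx * kz / (k1 * k3 + kx * k2)) :
    (k1 * k3) ^ 2 < k1 * kx * (k3 * (kz / ε - k2)) := by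
  have hd : 0 < k1 * k3 + kx * k2 := by positivity
  have hgap : k1 * k3 < kx * (kz / ε) - kx * k2 := by
    rw [lt_div_iff₀ hd] at hεlt
    rw [← mul_div_assoc, lt_sub_iff_add_lt, lt_div_iff₀ hε]
    linarith
  calc (k1 * k3) ^ 2 = (k1 * k3) * (k1 * k3) := sq _
    _ < (k1 * k3) * (kx * (kz / ε) - kx * k2) := mul_lt_mul_of_pos_left hgap (mul_pos hk1 hk3)
    _ = k1 * kx * (k3 * (kz / ε - k2)) := by ring

theorem composite_quadratic_estimate_general
    (kx kz k1 k2 k3 : ℝ)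
    (hkx : 0 < kx) (hk1 : 0 < k1) (hk2 : 0 < k2) (hk3 : 0 < k3) :
    ∀ ε : ℝ, 0 < ε → ε < kx * kz / (k1 * k3 + kx * k2) →
      ∃ lam : ℝ, 0 < lam ∧ ∀ a b : ℝ, 0 ≤ a → 0 ≤ b →
        (1 - k3 / (k1 + k3)) * (-(kx * a ^ 2) + k3 * a * b)
          + (k3 / (k1 + k3)) * (k1 * a * b + k2 * b ^ 2 - (kz / ε) * b ^ 2)
        ≤ -lam * (a ^ 2 + b ^ 2) := by
  intro ε hε hεlt
  have hK : 0 < k1 + k3 := add_pos hk1 hk3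
  obtain ⟨lam, hlam, hdom⟩ := exists_pos_mul_sq_add_sq_le_of_sq_lt_mul (mul_pos hk1 hkx)
    (sq_lt_mul_of_lt_epsStar hkx hk1 hk2 hk3 hε hεlt)
  refine ⟨lam / (k1 + k3), div_pos hlam hK, fun a b _ _ => ?_⟩
  rw [convex_combination_eq_neg_quadForm_div hK.ne', neg_mul, div_mul_eq_mul_div, ← neg_div]
  exact div_le_div_of_nonneg_right (neg_le_neg (hdom a b)) hK.le

/-- the composite quadratic-form estimate underlying the Lyapunov flow
analysis: with `θ* = k₃/(k₁+k₃)` and `ε* = kₓk_z/(k₁k₃ + kₓk₂)`, for every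
`ε ∈ (0, ε*)` there is `λ > 0` such that for all `a, b ≥ 0`,
`(1-θ*)(-kₓ a² + k₃ a b) + θ*(k₁ a b + k₂ b² - (k_z/ε) b²) ≤ -λ (a² + b²)`. -/
theorem composite_quadratic_estimate
    (kx kz k1 k2 k3 : ℝ)
    (hkx : 0 < kx) (hkz : 0 < kz) (hk1 : 0 < k1) (hk2 : 0 < k2) (hk3 : 0 < k3) :
    ∀ ε : ℝ, 0 < ε → ε < kx * kz / (k1 * k3 + kx * k2) →
      ∃ lam : ℝ, 0 < lam ∧ ∀ a b : ℝ, 0 ≤ a → 0 ≤ b →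
        (1 - k3 / (k1 + k3)) * (-(kx * a ^ 2) + k3 * a * b)
          + (k3 / (k1 + k3)) * (k1 * a * b + k2 * b ^ 2 - (kz / ε) * b ^ 2)
        ≤ -lam * (a ^ 2 + b ^ 2) :=
  composite_quadratic_estimate_general kx kz k1 k2 k3 hkx hk1 hk2 hk3
end

section
/- Let k_1, k_3, k_4, c_x > 0 satisfy k_3·k_4/k_1 < c_x, and set θ* := k_3/(k_1 + k_3) and λ := (k_1·c_x − k_3·k_4)/(k_1 + k_3). Let μ be a Borel probability measure on ℝ^m, let V : ℝ^{n1} → ℝ and W : ℝ^{n1} × ℝ^{n2} → ℝ, fix (x,z) ∈ ℝ^{n1} × ℝ^{n2} and r ≥ 0, and let S : ℝ^m → Set(ℝ^{n1} × ℝ^{n2}) be such that for every v, S(v) is nonempty and both g ↦ V(g₁) and g ↦ W(g) are bounded above on S(v). Suppose the functions v ↦ sup_{g∈S(v)} V(g₁), v ↦ sup_{g∈S(v)} W(g), and v ↦ sup_{g∈S(v)} [(1−θ*)V(g₁) + θ*W(g)] are μ-integrable, and that ∫ sup_{g∈S(v)} V(g₁) dμ(v) ≤ V(x) − c_x·r and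 ∫ sup_{g∈S(v)} W(g) dμ(v) ≤ W(x,z) + k_4·r. Then λ > 0 and ∫ sup_{g∈S(v)} [(1−θ*)V(g₁) + θ*W(g)] dμ(v) ≤ (1−θ*)V(x) + θ*W(x,z) − λ·r. -/
open MeasureTheory

/-! Since the weights `1 - θ*` and `θ*` are nonnegative, the supremum of the composite function over
each jump set is at most the same combination of the separate suprema of `V` and `W`. Integrating
and inserting the two expected-jump bounds gives the estimate, and with `θ* = k₃/(k₁+k₃)` the
coefficient of `r` becomes `(1-θ*)cₓ - θ*k₄ = (k₁cₓ - k₃k₄)/(k₁+k₃) = λ`, which is positive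
exactly when `k₃k₄/k₁ < cₓ`. -/

theorem csSup_image_add_le_of_nonneg {β : Type*} {s : Set β} (hs : s.Nonempty) {f g : β → ℝ}
    (hf : BddAbove (f '' s)) (hg : BddAbove (g '' s)) {a b : ℝ} (ha : 0 ≤ a) (hb : 0 ≤ b) :
    sSup ((fun y => a * f y + b * g y) '' s) ≤ a * sSup (f '' s) + b * sSup (g '' s) := by
  refine csSup_le (hs.image _) ?_
  rintro _ ⟨y, hy, rfl⟩
  have hfy : f y ≤ sSup (f '' s) := le_csSup hf (Set.mem_image_of_mem f hy)
  have hgy : g y ≤ sSup (g '' s) := le_csSup hg (Set.mem_image_of_mem g hy)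
  dsimp only
  gcongr

theorem integral_csSup_image_add_le_of_nonneg {α β : Type*} [MeasurableSpace α] {μ : Measure α}
    {S : α → Set β} (hS : ∀ v, (S v).Nonempty) {f g : β → ℝ}
    (hf : ∀ v, BddAbove (f '' S v)) (hg : ∀ v, BddAbove (g '' S v)) {a b : ℝ}
    (ha : 0 ≤ a) (hb : 0 ≤ b)
    (hf_int : Integrable (fun v => sSup (f '' S v)) μ)
    (hg_int : Integrable (fun v => sSup (g '' S v)) μ)
    (hfg_int : Integrable (fun v => sSup ((fun y => a * f y + b * g y) '' S v)) μ) :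
    ∫ v, sSup ((fun y => a * f y + b * g y) '' S v) ∂μ
      ≤ a * ∫ v, sSup (f '' S v) ∂μ + b * ∫ v, sSup (g '' S v) ∂μ := by
  rw [← integral_const_mul, ← integral_const_mul,
    ← integral_add (hf_int.const_mul a) (hg_int.const_mul b)]
  exact integral_mono hfg_int ((hf_int.const_mul a).add (hg_int.const_mul b))
    fun v => csSup_image_add_le_of_nonneg (hS v) (hf v) (hg v) ha hb

theorem composite_expected_jump_decrease_slow_general
    (m n1 n2 : ℕ)
    (k1 k3 k4 cx : ℝ)
    (hk1 : 0 < k1) (hk3 : 0 < k3)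
    (hgap : k3 * k4 / k1 < cx)
    (μ : Measure (EuclideanSpace ℝ (Fin m)))
    (V : EuclideanSpace ℝ (Fin n1) → ℝ)
    (W : EuclideanSpace ℝ (Fin n1) × EuclideanSpace ℝ (Fin n2) → ℝ)
    (x : EuclideanSpace ℝ (Fin n1)) (z : EuclideanSpace ℝ (Fin n2))
    (r : ℝ)
    (S : EuclideanSpace ℝ (Fin m) →
      Set (EuclideanSpace ℝ (Fin n1) × EuclideanSpace ℝ (Fin n2)))
    (hS_ne : ∀ v, (S v).Nonempty)
    (hV_bdd : ∀ v, BddAbove ((fun g => V g.1) '' S v))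
    (hW_bdd : ∀ v, BddAbove ((fun g => W g) '' S v))
    (hV_int : Integrable (fun v => sSup ((fun g => V g.1) '' S v)) μ)
    (hW_int : Integrable (fun v => sSup ((fun g => W g) '' S v)) μ)
    (hE_int : Integrable (fun v => sSup
      ((fun g => (1 - k3 / (k1 + k3)) * V g.1 + (k3 / (k1 + k3)) * W g) '' S v)) μ)
    (hV_dec : ∫ v, sSup ((fun g => V g.1) '' S v) ∂μ ≤ V x - cx * r)
    (hW_inc : ∫ v, sSup ((fun g => W g) '' S v) ∂μ ≤ W (x, z) + k4 * r) :
    0 < (k1 * cx - k3 * k4) / (k1 + k3) ∧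
    ∫ v, sSup ((fun g => (1 - k3 / (k1 + k3)) * V g.1
        + (k3 / (k1 + k3)) * W g) '' S v) ∂μ
      ≤ (1 - k3 / (k1 + k3)) * V x + (k3 / (k1 + k3)) * W (x, z)
        - ((k1 * cx - k3 * k4) / (k1 + k3)) * r := by
  have hsum : 0 < k1 + k3 := add_pos hk1 hk3
  have hθ : 0 ≤ k3 / (k1 + k3) := by positivity
  have hθ' : 0 ≤ 1 - k3 / (k1 + k3) := sub_nonneg.2 ((div_le_one hsum).2 (by linarith))
  have hgap' : k3 * k4 < cx * k1 := (div_lt_iff₀ hk1).1 hgap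
  refine ⟨div_pos (by linarith) hsum, ?_⟩
  calc _ ≤ (1 - k3 / (k1 + k3)) * ∫ v, sSup ((fun g => V g.1) '' S v) ∂μ
          + k3 / (k1 + k3) * ∫ v, sSup ((fun g => W g) '' S v) ∂μ :=
        integral_csSup_image_add_le_of_nonneg hS_ne hV_bdd hW_bdd hθ' hθ hV_int hW_int hE_int
    _ ≤ (1 - k3 / (k1 + k3)) * (V x - cx * r) + k3 / (k1 + k3) * (W (x, z) + k4 * r) := by
        gcongr
    _ = _ := by
        field_simp
        ring

/-- expected-jump decrease estimate for the composite Foster function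
`E_{θ*} = (1-θ*)V + θ*W`, in the slow-dominant case `k₃k₄/k₁ < cₓ`, with
`θ* = k₃/(k₁+k₃)` and `λ = (k₁cₓ - k₃k₄)/(k₁+k₃)`. -/
theorem composite_expected_jump_decrease_slow
    (m n1 n2 : ℕ)
    (k1 k3 k4 cx : ℝ)
    (hk1 : 0 < k1) (hk3 : 0 < k3) (hk4 : 0 < k4) (hcx : 0 < cx)
    (hgap : k3 * k4 / k1 < cx)
    (μ : Measure (EuclideanSpace ℝ (Fin m))) [IsProbabilityMeasure μ]
    (V : EuclideanSpace ℝ (Fin n1) → ℝ)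
    (W : EuclideanSpace ℝ (Fin n1) × EuclideanSpace ℝ (Fin n2) → ℝ)
    (x : EuclideanSpace ℝ (Fin n1)) (z : EuclideanSpace ℝ (Fin n2))
    (r : ℝ) (hr : 0 ≤ r)
    (S : EuclideanSpace ℝ (Fin m) →
      Set (EuclideanSpace ℝ (Fin n1) × EuclideanSpace ℝ (Fin n2)))
    (hS_ne : ∀ v, (S v).Nonempty)
    (hV_bdd : ∀ v, BddAbove ((fun g => V g.1) '' S v))
    (hW_bdd : ∀ v, BddAbove ((fun g => W g) '' S v))
    (hV_int : Integrable (fun v => sSup ((fun g => V g.1) '' S v)) μ)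
    (hW_int : Integrable (fun v => sSup ((fun g => W g) '' S v)) μ)
    (hE_int : Integrable (fun v => sSup
      ((fun g => (1 - k3 / (k1 + k3)) * V g.1 + (k3 / (k1 + k3)) * W g) '' S v)) μ)
    (hV_dec : ∫ v, sSup ((fun g => V g.1) '' S v) ∂μ ≤ V x - cx * r)
    (hW_inc : ∫ v, sSup ((fun g => W g) '' S v) ∂μ ≤ W (x, z) + k4 * r) :
    0 < (k1 * cx - k3 * k4) / (k1 + k3) ∧
    ∫ v, sSup ((fun g => (1 - k3 / (k1 + k3)) * V g.1
        + (k3 / (k1 + k3)) * W g) '' S v) ∂μ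
      ≤ (1 - k3 / (k1 + k3)) * V x + (k3 / (k1 + k3)) * W (x, z)
        - ((k1 * cx - k3 * k4) / (k1 + k3)) * r :=
  composite_expected_jump_decrease_slow_general m n1 n2 k1 k3 k4 cx hk1 hk3 hgap μ V W x z r S hS_ne
    hV_bdd hW_bdd hV_int hW_int hE_int hV_dec hW_inc
end

section
/- Let k_1, k_3, k_5, c_z > 0 satisfy k_1·k_5/k_3 < c_z, and set θ* := k_3/(k_1 + k_3) and λ := (k_3·c_z − k_1·k_5)/(k_1 + k_3). Let μ be a Borel probability measure on ℝ^m, let V : ℝ^{n1} → ℝ and W : ℝ^{n1} × ℝ^{n2} → ℝ, fix (x,z) ∈ ℝ^{n1} × ℝ^{n2} and r ≥ 0, and let S : ℝ^m → Set(ℝ^{n1} × ℝ^{n2}) be such that for every v, S(v) is nonempty and both g ↦ V(g₁) and g ↦ W(g) are bounded above on S(v). Suppose the functions v ↦ sup_{g∈S(v)} V(g₁), v ↦ sup_{g∈S(v)} W(g), and v ↦ sup_{g∈S(v)} [(1−θ*)V(g₁) + θ*W(g)] are μ-integrable, and that ∫ sup_{g∈S(v)} V(g₁) dμ(v) ≤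 V(x) + k_5·r and ∫ sup_{g∈S(v)} W(g) dμ(v) ≤ W(x,z) − c_z·r. Then λ > 0 and ∫ sup_{g∈S(v)} [(1−θ*)V(g₁) + θ*W(g)] dμ(v) ≤ (1−θ*)V(x) + θ*W(x,z) − λ·r. -/
/-! The supremum of a nonnegative combination of two functions over a jump set is at most the same
combination of their suprema; integrating, the expected jump of `E_{θ*}` is bounded by
`(1-θ*)(V x + k₅ r) + θ*(W(x,z) - c_z r)`, and with `θ* = k₃/(k₁+k₃)` the coefficient of `r`
there is exactly `-λ`. -/

open MeasureTheory

section SupOfCombination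

variable {α : Type*} {s : Set α} {f h : α → ℝ} {a b : ℝ}

theorem csSup_image_mul_add_mul_le (hs : s.Nonempty) (hf : BddAbove (f '' s))
    (hh : BddAbove (h '' s)) (ha : 0 ≤ a) (hb : 0 ≤ b) :
    sSup ((fun g => a * f g + b * h g) '' s) ≤ a * sSup (f '' s) + b * sSup (h '' s) := by
  refine csSup_le (hs.image _) ?_
  rintro _ ⟨g, hg, rfl⟩
  have hfg : f g ≤ sSup (f '' s) := le_csSup hf (Set.mem_image_of_mem f hg)
  have hhg : h g ≤ sSup (h '' s) := le_csSup hh (Set.mem_image_of_mem h hg)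
  dsimp only
  gcongr

end SupOfCombination

theorem integral_csSup_image_mul_add_mul_le {Ω β : Type*} [MeasurableSpace Ω] {μ : Measure Ω}
    {S : Ω → Set β} {f h : β → ℝ} {a b : ℝ} (hS : ∀ v, (S v).Nonempty)
    (hf : ∀ v, BddAbove (f '' S v)) (hh : ∀ v, BddAbove (h '' S v)) (ha : 0 ≤ a) (hb : 0 ≤ b)
    (hf_int : Integrable (fun v => sSup (f '' S v)) μ)
    (hh_int : Integrable (fun v => sSup (h '' S v)) μ)
    (hfh_int : Integrable (fun v => sSup ((fun g => a * f g + b * h g) '' S v)) μ) :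
    ∫ v, sSup ((fun g => a * f g + b * h g) '' S v) ∂μ
      ≤ a * ∫ v, sSup (f '' S v) ∂μ + b * ∫ v, sSup (h '' S v) ∂μ := by
  rw [← integral_const_mul, ← integral_const_mul,
    ← integral_add (hf_int.const_mul a) (hh_int.const_mul b)]
  exact integral_mono hfh_int ((hf_int.const_mul a).add (hh_int.const_mul b))
    fun v => csSup_image_mul_add_mul_le (hS v) (hf v) (hh v) ha hb

section FastDominantWeights

variable {k1 k3 k5 cz : ℝ}

theorem fast_dominant_weight_mem_Icc (hk1 : 0 < k1) (hk3 : 0 < k3) :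
    k3 / (k1 + k3) ∈ Set.Icc (0 : ℝ) 1 :=
  ⟨by positivity, (div_le_one (by linarith)).mpr (by linarith)⟩

theorem fast_dominant_rate_pos (hk1 : 0 < k1) (hk3 : 0 < k3) (hgap : k1 * k5 / k3 < cz) :
    0 < (k3 * cz - k1 * k5) / (k1 + k3) := by
  have : k1 * k5 < cz * k3 := (div_lt_iff₀ hk3).mp hgap
  exact div_pos (by linarith) (by linarith)

theorem fast_dominant_weighted_rate (hk : k1 + k3 ≠ 0) :
    (1 - k3 / (k1 + k3)) * k5 - k3 / (k1 + k3) * cz = -((k3 * cz - k1 * k5) / (k1 + k3)) := by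
  field_simp
  ring

end FastDominantWeights

theorem composite_expected_jump_decrease_fast_general
    (m n1 n2 : ℕ)
    (k1 k3 k5 cz : ℝ)
    (hk1 : 0 < k1) (hk3 : 0 < k3)
    (hgap : k1 * k5 / k3 < cz)
    (μ : Measure (EuclideanSpace ℝ (Fin m)))
    (V : EuclideanSpace ℝ (Fin n1) → ℝ)
    (W : EuclideanSpace ℝ (Fin n1) × EuclideanSpace ℝ (Fin n2) → ℝ)
    (x : EuclideanSpace ℝ (Fin n1)) (z : EuclideanSpace ℝ (Fin n2))
    (r : ℝ)
    (S : EuclideanSpace ℝ (Fin m) →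
      Set (EuclideanSpace ℝ (Fin n1) × EuclideanSpace ℝ (Fin n2)))
    (hS_ne : ∀ v, (S v).Nonempty)
    (hV_bdd : ∀ v, BddAbove ((fun g => V g.1) '' S v))
    (hW_bdd : ∀ v, BddAbove ((fun g => W g) '' S v))
    (hV_int : Integrable (fun v => sSup ((fun g => V g.1) '' S v)) μ)
    (hW_int : Integrable (fun v => sSup ((fun g => W g) '' S v)) μ)
    (hE_int : Integrable (fun v => sSup
      ((fun g => (1 - k3 / (k1 + k3)) * V g.1 + (k3 / (k1 + k3)) * W g) '' S v)) μ)
    (hV_dec : ∫ v, sSup ((fun g => V g.1) '' S v) ∂μ ≤ V x + k5 * r)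
    (hW_inc : ∫ v, sSup ((fun g => W g) '' S v) ∂μ ≤ W (x, z) - cz * r) :
    0 < (k3 * cz - k1 * k5) / (k1 + k3) ∧
    ∫ v, sSup ((fun g => (1 - k3 / (k1 + k3)) * V g.1
        + (k3 / (k1 + k3)) * W g) '' S v) ∂μ
      ≤ (1 - k3 / (k1 + k3)) * V x + (k3 / (k1 + k3)) * W (x, z)
        - ((k3 * cz - k1 * k5) / (k1 + k3)) * r := by
  refine ⟨fast_dominant_rate_pos hk1 hk3 hgap, ?_⟩
  obtain ⟨hθ_nonneg, hθ_le_one⟩ := fast_dominant_weight_mem_Icc hk1 hk3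
  have h1θ_nonneg : 0 ≤ 1 - k3 / (k1 + k3) := sub_nonneg.mpr hθ_le_one
  have hrate := fast_dominant_weighted_rate (k5 := k5) (cz := cz) (by linarith : k1 + k3 ≠ 0)
  calc _ ≤ (1 - k3 / (k1 + k3)) * ∫ v, sSup ((fun g => V g.1) '' S v) ∂μ
          + k3 / (k1 + k3) * ∫ v, sSup ((fun g => W g) '' S v) ∂μ :=
        integral_csSup_image_mul_add_mul_le (f := fun g => V g.1) hS_ne hV_bdd hW_bdd
          h1θ_nonneg hθ_nonneg hV_int hW_int hE_int
    _ ≤ (1 - k3 / (k1 + k3)) * (V x + k5 * r) + k3 / (k1 + k3) * (W (x, z) - cz * r) := by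
        gcongr
    _ = _ := by linear_combination r * hrate

/-- expected-jump decrease estimate for the composite Foster function
`E_{θ*} = (1-θ*)V + θ*W`, in the fast-dominant case `k₁k₅/k₃ < c_z`, with
`θ* = k₃/(k₁+k₃)` and `λ = (k₃c_z - k₁k₅)/(k₁+k₃)`. -/
theorem composite_expected_jump_decrease_fast
    (m n1 n2 : ℕ)
    (k1 k3 k5 cz : ℝ)
    (hk1 : 0 < k1) (hk3 : 0 < k3) (hk5 : 0 < k5) (hcz : 0 < cz)
    (hgap : k1 * k5 / k3 < cz)
    (μ : Measure (EuclideanSpace ℝ (Fin m))) [IsProbabilityMeasure μ]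
    (V : EuclideanSpace ℝ (Fin n1) → ℝ)
    (W : EuclideanSpace ℝ (Fin n1) × EuclideanSpace ℝ (Fin n2) → ℝ)
    (x : EuclideanSpace ℝ (Fin n1)) (z : EuclideanSpace ℝ (Fin n2))
    (r : ℝ) (hr : 0 ≤ r)
    (S : EuclideanSpace ℝ (Fin m) →
      Set (EuclideanSpace ℝ (Fin n1) × EuclideanSpace ℝ (Fin n2)))
    (hS_ne : ∀ v, (S v).Nonempty)
    (hV_bdd : ∀ v, BddAbove ((fun g => V g.1) '' S v))
    (hW_bdd : ∀ v, BddAbove ((fun g => W g) '' S v))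
    (hV_int : Integrable (fun v => sSup ((fun g => V g.1) '' S v)) μ)
    (hW_int : Integrable (fun v => sSup ((fun g => W g) '' S v)) μ)
    (hE_int : Integrable (fun v => sSup
      ((fun g => (1 - k3 / (k1 + k3)) * V g.1 + (k3 / (k1 + k3)) * W g) '' S v)) μ)
    (hV_dec : ∫ v, sSup ((fun g => V g.1) '' S v) ∂μ ≤ V x + k5 * r)
    (hW_inc : ∫ v, sSup ((fun g => W g) '' S v) ∂μ ≤ W (x, z) - cz * r) :
    0 < (k3 * cz - k1 * k5) / (k1 + k3) ∧
    ∫ v, sSup ((fun g => (1 - k3 / (k1 + k3)) * V g.1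
        + (k3 / (k1 + k3)) * W g) '' S v) ∂μ
      ≤ (1 - k3 / (k1 + k3)) * V x + (k3 / (k1 + k3)) * W (x, z)
        - ((k3 * cz - k1 * k5) / (k1 + k3)) * r :=
  composite_expected_jump_decrease_fast_general m n1 n2 k1 k3 k5 cz hk1 hk3 hgap μ V W x z r S hS_ne
    hV_bdd hW_bdd hV_int hW_int hE_int hV_dec hW_inc
end

section
/- Let C_x ⊆ ℝ^{n1} be closed, let M : ℝ^{n1} → Set(ℝ^{n2}) be locally bounded with closed graph and M(x) nonempty for all x ∈ C_x, and let F_x : ℝ^{n1} × ℝ^{n2} → Set(ℝ^{n1}) be locally bounded with closed graph and nonempty values. Define S(x) := { f ∈ ℝ^{n1} : ∃ z ∈ M(x), f ∈ F_x(x,z) } and F̃(x) := closure of the convex hull of S(x). Then for every x ∈ C_x, F̃(x) is nonempty, compact, and convex, and equals the convex hull of S(x); F̃ is locally bounded; and the restricted graph {(x,f) : x ∈ C_x, f ∈ F̃(x)} is closed in ℝ^{n1} × ℝ^{n1}. -/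
/-!
Closed graph plus local boundedness (into proper spaces) is preserved by every map of the form
`x ↦ (fun z => g (x, z)) '' T x` with `g` continuous: over a convergent sequence of base points the
fibre points stay bounded, so a subsequence converges and the limit lies in the closed graph of `T`.
The map `S x = {f | ∃ z ∈ M x, f ∈ F (x, z)}` is of this form (project the pairs `(z, f)`), and by
Carathéodory's theorem so is `x ↦ convexHull ℝ (S x)`: it is the image of
`stdSimplex × (S x) ^ (finrank + 1)` under `(w, f) ↦ ∑ wᵢ • fᵢ`. Closed bounded values are compact, so
taking the closure of the convex hull changes nothing.
-/

open Set Bornology Filter Topology Module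

-- Shorter Carathéodory representations are padded with zero weights.
theorem convexHull_eq_image_stdSimplex_pi {𝕜 E : Type*} [Field 𝕜] [LinearOrder 𝕜]
    [IsStrictOrderedRing 𝕜] [AddCommGroup E] [Module 𝕜 E] [FiniteDimensional 𝕜 E] (s : Set E) :
    convexHull 𝕜 s = (fun p : (Fin (finrank 𝕜 E + 1) → 𝕜) × (Fin (finrank 𝕜 E + 1) → E) =>
      ∑ i, p.1 i • p.2 i) '' (stdSimplex 𝕜 _ ×ˢ univ.pi fun _ => s) := by
  refine Subset.antisymm (fun x hx => ?_) ?_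
  · obtain ⟨ι, _, z, w, hzs, hai, hw0, hw1, rfl⟩ := eq_pos_convex_span_of_mem_convexHull hx
    have hcard : Fintype.card ι ≤ Fintype.card (Fin (finrank 𝕜 E + 1)) := by
      simpa using hai.card_le_finrank_succ.trans (Nat.succ_le_succ (Submodule.finrank_le _))
    obtain ⟨e⟩ := Function.Embedding.nonempty_of_card_le hcard
    obtain ⟨i₀⟩ : Nonempty ι := by
      by_contra h
      simp [not_nonempty_iff.mp h] at hw1
    refine ⟨(Function.extend e w 0, Function.extend e z fun _ => z i₀), ⟨⟨fun j => ?_, ?_⟩,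
      fun j _ => ?_⟩, ?_⟩
    · by_cases hj : ∃ i, e i = j
      · obtain ⟨i, rfl⟩ := hj
        simpa [e.injective.extend_apply] using (hw0 i).le
      · simp [Function.extend_apply' _ _ _ hj]
    · rw [← hw1]
      exact (Fintype.sum_of_injective e e.injective w _
        (fun j hj => by simp [Function.extend_apply' _ _ _ (by simpa using hj)]) fun i =>
          (e.injective.extend_apply _ _ i).symm).symm
    · by_cases hj : ∃ i, e i = j
      · obtain ⟨i, rfl⟩ := hj
        simpa [e.injective.extend_apply] using hzs (mem_range_self i)
      · simpa [Function.extend_apply' _ _ _ hj] using hzs (mem_range_self i₀)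
    · refine (Fintype.sum_of_injective e e.injective _ _ (fun j hj => ?_) fun i => ?_).symm
      · simp [Function.extend_apply' _ _ _ (by simpa using hj)]
      · simp [e.injective.extend_apply]
  · rintro _ ⟨⟨w, z⟩, ⟨hw, hz⟩, rfl⟩
    exact mem_convexHull_of_exists_fintype w z hw.1 hw.2 (fun i => hz i trivial) rfl

namespace SetValued

variable {X Y Z W : Type*}

def graph (T : X → Set Y) : Set (X × Y) := {p | p.2 ∈ T p.1}

def OuterSemicontinuous [TopologicalSpace X] [TopologicalSpace Y] (T : X → Set Y) : Prop :=
  IsClosed (graph T)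

def LocallyBounded [Bornology X] [Bornology Y] (T : X → Set Y) : Prop :=
  ∀ K : Set X, IsBounded K → IsBounded (⋃ x ∈ K, T x)

section image

variable [PseudoMetricSpace X] [MetricSpace Y] [PseudoMetricSpace Z] {T : X → Set Z}

theorem LocallyBounded.isBounded_apply (hTb : LocallyBounded T) (x : X) : IsBounded (T x) := by
  simpa using hTb {x} isBounded_singleton

theorem OuterSemicontinuous.isClosed_apply (hT : OuterSemicontinuous T) (x : X) :
    IsClosed (T x) :=
  hT.preimage (Continuous.prodMk_right x)

theorem OuterSemicontinuous.isCompact_apply [ProperSpace Z] (hT : OuterSemicontinuous T)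
    (hTb : LocallyBounded T) (x : X) : IsCompact (T x) :=
  Metric.isCompact_of_isClosed_isBounded (hT.isClosed_apply x) (hTb.isBounded_apply x)

theorem OuterSemicontinuous.image [ProperSpace Z] (hT : OuterSemicontinuous T)
    (hTb : LocallyBounded T) {g : X × Z → Y} (hg : Continuous g) :
    OuterSemicontinuous fun x => (fun z => g (x, z)) '' T x := by
  refine IsSeqClosed.isClosed fun {u p} hu hup => ?_
  choose z hz hgz using hu
  have hx : Tendsto (fun n => (u n).1) atTop (𝓝 p.1) := (continuous_fst.tendsto p).comp hup
  obtain ⟨z₀, -, φ, hφ, hzφ⟩ := tendsto_subseq_of_bounded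
    (hTb _ (Metric.isBounded_range_of_tendsto _ hx)) fun n => mem_biUnion (mem_range_self n) (hz n)
  have hxzφ := (hx.comp hφ.tendsto_atTop).prodMk_nhds hzφ
  refine ⟨z₀, hT.mem_of_tendsto hxzφ (Eventually.of_forall fun n => hz (φ n)),
    tendsto_nhds_unique ((hg.tendsto _).comp hxzφ) ?_⟩
  simpa [Function.comp_def, hgz] using (continuous_snd.tendsto p).comp (hup.comp hφ.tendsto_atTop)

theorem LocallyBounded.image [ProperSpace X] [ProperSpace Z] (hTb : LocallyBounded T)
    {g : X × Z → Y} (hg : Continuous g) :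
    LocallyBounded fun x => (fun z => g (x, z)) '' T x := by
  intro K hK
  refine (((hK.prod (hTb K hK)).isCompact_closure.image hg).isBounded).subset ?_
  simp only [iUnion_subset_iff]
  rintro x hx _ ⟨z, hz, rfl⟩
  exact ⟨(x, z), subset_closure ⟨hx, mem_biUnion hx hz⟩, rfl⟩

end image

section bind

def sigma (M : X → Set Y) (F : X × Y → Set W) (x : X) : Set (Y × W) :=
  {q | q.1 ∈ M x ∧ q.2 ∈ F (x, q.1)}

theorem OuterSemicontinuous.sigma [TopologicalSpace X] [TopologicalSpace Y] [TopologicalSpace W]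
    {M : X → Set Y} {F : X × Y → Set W} (hM : OuterSemicontinuous M)
    (hF : OuterSemicontinuous F) : OuterSemicontinuous (sigma M F) :=
  (hM.preimage (f := fun p : X × Y × W => (p.1, p.2.1)) (by fun_prop)).inter
    (hF.preimage (f := fun p : X × Y × W => ((p.1, p.2.1), p.2.2)) (by fun_prop))

theorem LocallyBounded.sigma [Bornology X] [Bornology Y] [Bornology W]
    {M : X → Set Y} {F : X × Y → Set W} (hMb : LocallyBounded M) (hFb : LocallyBounded F) :
    LocallyBounded (sigma M F) := by
  intro K hK
  refine ((hMb K hK).prod (hFb _ (hK.prod (hMb K hK)))).subset ?_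
  simp only [iUnion_subset_iff]
  rintro x hx ⟨y, w⟩ ⟨hy, hw⟩
  exact ⟨mem_biUnion hx hy, mem_biUnion (mk_mem_prod hx (mem_biUnion hx hy)) hw⟩

theorem sigma_image_snd (M : X → Set Y) (F : X × Y → Set W) (x : X) :
    (fun q => ((x, q) : X × Y × W).2.2) '' sigma M F x = {w | ∃ y ∈ M x, w ∈ F (x, y)} := by
  ext w
  simp [sigma]

variable [PseudoMetricSpace X] [PseudoMetricSpace Y] [ProperSpace Y]
  [MetricSpace W] [ProperSpace W] {M : X → Set Y} {F : X × Y → Set W}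

theorem OuterSemicontinuous.bind (hM : OuterSemicontinuous M) (hMb : LocallyBounded M)
    (hF : OuterSemicontinuous F) (hFb : LocallyBounded F) :
    OuterSemicontinuous fun x => {w | ∃ y ∈ M x, w ∈ F (x, y)} := by
  simpa only [sigma_image_snd] using (hM.sigma hF).image (hMb.sigma hFb) continuous_snd.snd

theorem LocallyBounded.bind [ProperSpace X] (hMb : LocallyBounded M) (hFb : LocallyBounded F) :
    LocallyBounded fun x => {w | ∃ y ∈ M x, w ∈ F (x, y)} := by
  simpa only [sigma_image_snd] using (hMb.sigma hFb).image continuous_snd.snd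

end bind

section convexHull

variable {T : X → Set Y}

theorem OuterSemicontinuous.stdSimplex_prod_pi [TopologicalSpace X] [TopologicalSpace Y]
    (hT : OuterSemicontinuous T) (n : ℕ) :
    OuterSemicontinuous fun x => stdSimplex ℝ (Fin n) ×ˢ univ.pi fun _ : Fin n => T x := by
  have hgraph : graph (fun x => stdSimplex ℝ (Fin n) ×ˢ univ.pi fun _ : Fin n => T x) =
      (fun p => p.2.1) ⁻¹' stdSimplex ℝ (Fin n) ∩
        ⋂ i, (fun p : X × (Fin n → ℝ) × (Fin n → Y) => (p.1, p.2.2 i)) ⁻¹' graph T := by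
    ext
    simp [graph]
  rw [OuterSemicontinuous, hgraph]
  exact ((isClosed_stdSimplex ℝ (Fin n)).preimage continuous_snd.fst).inter
    (isClosed_iInter fun i => hT.preimage (by fun_prop))

theorem LocallyBounded.stdSimplex_prod_pi [Bornology X] [PseudoMetricSpace Y]
    (hTb : LocallyBounded T) (n : ℕ) :
    LocallyBounded fun x => stdSimplex ℝ (Fin n) ×ˢ univ.pi fun _ : Fin n => T x := by
  intro K hK
  refine ((bounded_stdSimplex (Fin n)).prod (IsBounded.pi fun _ => hTb K hK)).subset ?_
  simp only [iUnion_subset_iff]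
  rintro x hx ⟨w, z⟩ ⟨hw, hz⟩
  exact ⟨hw, fun i _ => mem_biUnion hx (hz i trivial)⟩

variable [PseudoMetricSpace X] [NormedAddCommGroup Y] [NormedSpace ℝ Y] [FiniteDimensional ℝ Y]

theorem OuterSemicontinuous.convexHull (hT : OuterSemicontinuous T) (hTb : LocallyBounded T) :
    OuterSemicontinuous fun x => _root_.convexHull ℝ (T x) := by
  rw [funext fun x => convexHull_eq_image_stdSimplex_pi (T x)]
  exact (hT.stdSimplex_prod_pi _).image (hTb.stdSimplex_prod_pi _)
    (g := fun p : X × (Fin _ → ℝ) × (Fin _ → Y) => ∑ i, p.2.1 i • p.2.2 i) (by fun_prop)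

theorem LocallyBounded.convexHull [ProperSpace X] (hTb : LocallyBounded T) :
    LocallyBounded fun x => _root_.convexHull ℝ (T x) := by
  rw [funext fun x => convexHull_eq_image_stdSimplex_pi (T x)]
  exact (hTb.stdSimplex_prod_pi _).image
    (g := fun p : X × (Fin _ → ℝ) × (Fin _ → Y) => ∑ i, p.2.1 i • p.2.2 i) (by fun_prop)

end convexHull

end SetValued

/-- the reduced flow map `F̃(x) = closure (convexHull {f : f ∈ F_x(x,z),
z ∈ M(x)})` satisfies the Basic Conditions relative to the closed set `C_x`: for
each `x ∈ C_x` it is nonempty, compact, convex and equals the convex hull of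
`S(x) = ⋃_{z ∈ M(x)} F_x(x,z)`; moreover `F̃` is locally bounded and its graph
restricted to `C_x` is closed. -/
theorem reduced_flow_map_basic_conditions
    (n1 n2 : ℕ)
    (Cx : Set (EuclideanSpace ℝ (Fin n1))) (hCx : IsClosed Cx)
    (M : EuclideanSpace ℝ (Fin n1) → Set (EuclideanSpace ℝ (Fin n2)))
    (hM_lb : ∀ K : Set (EuclideanSpace ℝ (Fin n1)), Bornology.IsBounded K →
      Bornology.IsBounded (⋃ x ∈ K, M x))
    (hM_graph : IsClosed {p : EuclideanSpace ℝ (Fin n1) × EuclideanSpace ℝ (Fin n2) |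
      p.2 ∈ M p.1})
    (hM_ne : ∀ x ∈ Cx, (M x).Nonempty)
    (Fx : EuclideanSpace ℝ (Fin n1) × EuclideanSpace ℝ (Fin n2) →
      Set (EuclideanSpace ℝ (Fin n1)))
    (hFx_lb : ∀ K : Set (EuclideanSpace ℝ (Fin n1) × EuclideanSpace ℝ (Fin n2)),
      Bornology.IsBounded K → Bornology.IsBounded (⋃ y ∈ K, Fx y))
    (hFx_graph : IsClosed {p : (EuclideanSpace ℝ (Fin n1) × EuclideanSpace ℝ (Fin n2)) ×
      EuclideanSpace ℝ (Fin n1) | p.2 ∈ Fx p.1})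
    (hFx_ne : ∀ y, (Fx y).Nonempty) :
    (∀ x ∈ Cx,
      (closure (convexHull ℝ {f | ∃ z ∈ M x, f ∈ Fx (x, z)})).Nonempty ∧
      IsCompact (closure (convexHull ℝ {f | ∃ z ∈ M x, f ∈ Fx (x, z)})) ∧
      Convex ℝ (closure (convexHull ℝ {f | ∃ z ∈ M x, f ∈ Fx (x, z)})) ∧
      closure (convexHull ℝ {f | ∃ z ∈ M x, f ∈ Fx (x, z)})
        = convexHull ℝ {f | ∃ z ∈ M x, f ∈ Fx (x, z)}) ∧
    (∀ K : Set (EuclideanSpace ℝ (Fin n1)), Bornology.IsBounded K →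
      Bornology.IsBounded
        (⋃ x ∈ K, closure (convexHull ℝ {f | ∃ z ∈ M x, f ∈ Fx (x, z)}))) ∧
    IsClosed {p : EuclideanSpace ℝ (Fin n1) × EuclideanSpace ℝ (Fin n1) |
      p.1 ∈ Cx ∧ p.2 ∈ closure (convexHull ℝ {f | ∃ z ∈ M p.1, f ∈ Fx (p.1, z)})} := by
  have hS : SetValued.OuterSemicontinuous fun x => {f | ∃ z ∈ M x, f ∈ Fx (x, z)} :=
    SetValued.OuterSemicontinuous.bind hM_graph hM_lb hFx_graph hFx_lb
  have hSb : SetValued.LocallyBounded fun x => {f | ∃ z ∈ M x, f ∈ Fx (x, z)} :=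
    SetValued.LocallyBounded.bind hM_lb hFx_lb
  have hH := hS.convexHull hSb
  have hHb := hSb.convexHull
  have hcl : ∀ x, closure (convexHull ℝ {f | ∃ z ∈ M x, f ∈ Fx (x, z)}) =
      convexHull ℝ {f | ∃ z ∈ M x, f ∈ Fx (x, z)} := fun x => (hH.isClosed_apply x).closure_eq
  simp only [hcl]
  refine ⟨fun x hx => ⟨?_, hH.isCompact_apply hHb x, convex_convexHull ℝ _, trivial⟩, hHb,
    (hCx.preimage continuous_fst).inter hH⟩
  obtain ⟨z, hz⟩ := hM_ne x hx
  obtain ⟨f, hf⟩ := hFx_ne (x, z)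
  exact ⟨f, subset_convexHull ℝ _ ⟨z, hz, hf⟩⟩
end
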